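/- Let R be an expanding edge replacement system and Gl_R its gluing automaton. Given two words x₀…x_m and y₀…y_m in E_R that are equal except that x_m≠y_m, if they represent adjacent edges of the full expansion E_m, then the word (x₀,y₀)(x₁,y₁)…(x_m,y_m) is recognized by Gl_R, and its run consists of m Type 0 transitions followed by one Type 1 transition. Moreover, the adjacency type of x_m and y_m in the graph Γ_{c(x_{m-1})}=Γ_{c(y_{m-1})} coincides with the adjacency type of x₀…x_m and y₀…y_m in E_m, and the last state of the run, q₁(c(x_m),α;c(y_m),β), records this adjacency type in the sense of the Type 1 rule. -/

import Mathlib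

/-!
Formalization of edge replacement systems, their limit-space gluing relation,
and the gluing automaton, following Belk–Forrest and the paper
"Rationality of the gluing of edge replacement systems".
-/

namespace ERSPaper

/-- The five adjacency-type symbols `in`, `out`, `lp`, `db⁺`, `db⁻`. -/
inductive EType : Type
  | inn : EType
  | out : EType
  | lp : EType
  | dbp : EType
  | dbm : EType
  deriving DecidableEq

/-- An edge replacement system satisfying the loop-color assumption.
`V z` / `E z` are the vertices/edges of the base graph (`z = none`) or of the
replacement graph `Γ c` (`z = some c`).  For loop colors the two boundary
vertices coincide (the single boundary vertex `λ_c`); for non-loop colors they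
are distinct.  The field `loop_iff` is the loop-color assumption: an edge is a
loop if and only if its color is a loop color. -/
structure ERS : Type 1 where
  Col : Type
  [colFintype : Fintype Col]
  [colDecEq : DecidableEq Col]
  V : Option Col → Type
  E : Option Col → Type
  [vFintype : ∀ z, Fintype (V z)]
  [eFintype : ∀ z, Fintype (E z)]
  [vDecEq : ∀ z, DecidableEq (V z)]
  ini : ∀ z, E z → V z
  fin : ∀ z, E z → V z
  col : ∀ z, E z → Col
  loopCol : Col → Prop
  bIni : ∀ c : Col, V (some c)
  bFin : ∀ c : Col, V (some c)
  bd_eq_iff : ∀ c : Col, (bIni c = bFin c ↔ loopCol c)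
  loop_iff : ∀ z (e : E z), (ini z e = fin z e ↔ loopCol (col z e))

attribute [instance] ERS.colFintype ERS.colDecEq ERS.vFintype ERS.eFintype ERS.vDecEq

namespace ERS

/-- The alphabet `Σ`: the disjoint union of the edge sets of the base graph and
of all the replacement graphs. -/
def Alph (R : ERS) : Type := Σ z : Option R.Col, R.E z

/-- Membership in the symbol space `Ω_R`: infinite directed walks on the color
graph starting at `q(0)`, i.e. `x₀` is an edge of the base graph and `x_{l+1}`
is an edge of `Γ_{c(x_l)}`. -/
def IsWalk (R : ERS) (x : ℕ → R.Alph) : Prop :=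
  (x 0).1 = none ∧ ∀ l : ℕ, (x (l + 1)).1 = some (R.col (x l).1 (x l).2)

/-- The finite word `x₀ … x_m` belongs to `E_R`. -/
def IsWalkUpTo (R : ERS) (x : ℕ → R.Alph) (m : ℕ) : Prop :=
  (x 0).1 = none ∧ ∀ l : ℕ, l < m → (x (l + 1)).1 = some (R.col (x l).1 (x l).2)

theorem IsWalk.upTo {R : ERS} {x : ℕ → R.Alph} (hx : R.IsWalk x) (m : ℕ) :
    R.IsWalkUpTo x m :=
  ⟨hx.1, fun l _ => hx.2 l⟩

end ERS

/-- A finite graph whose edges are colored by the colors of `R`. -/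
structure GraphData (R : ERS) : Type 1 where
  V : Type
  E : Type
  ι : E → V
  τ : E → V
  col : E → R.Col

/-- An edge is incident on a vertex. -/
def GraphData.IncidentOn {R : ERS} (G : GraphData R) (e : G.E) (v : G.V) : Prop :=
  G.ι e = v ∨ G.τ e = v

/-- Two edges are incident on a common vertex. -/
def GraphData.Adjacent {R : ERS} (G : GraphData R) (e f : G.E) : Prop :=
  ∃ v : G.V, G.IncidentOn e v ∧ G.IncidentOn f v

namespace ERS

/-- When expanding the edge `e`, a vertex `v` of the replacement graph
`Γ_{c(e)}` is attached: boundary vertices go to the endpoints of `e`,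
interior vertices give fresh vertices. -/
def attach (R : ERS) (G : GraphData R) (e : G.E) (v : R.V (some (G.col e))) :
    G.V ⊕ (Σ e : G.E,
      {v : R.V (some (G.col e)) // v ≠ R.bIni (G.col e) ∧ v ≠ R.bFin (G.col e)}) :=
  if h1 : v = R.bIni (G.col e) then Sum.inl (G.ι e)
  else if h2 : v = R.bFin (G.col e) then Sum.inl (G.τ e)
  else Sum.inr ⟨e, v, h1, h2⟩

/-- The simultaneous expansion of every edge of `G`. -/
def expandG (R : ERS) (G : GraphData R) : GraphData R where
  V := G.V ⊕ (Σ e : G.E,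
    {v : R.V (some (G.col e)) // v ≠ R.bIni (G.col e) ∧ v ≠ R.bFin (G.col e)})
  E := Σ e : G.E, R.E (some (G.col e))
  ι := fun p => R.attach G p.1 (R.ini (some (G.col p.1)) p.2)
  τ := fun p => R.attach G p.1 (R.fin (some (G.col p.1)) p.2)
  col := fun p => R.col (some (G.col p.1)) p.2

/-- The base graph, as graph data. -/
def base (R : ERS) : GraphData R :=
  ⟨R.V none, R.E none, R.ini none, R.fin none, R.col none⟩

/-- The full expansion sequence `E_m`. -/
def fullExp (R : ERS) : ℕ → GraphData R
  | 0 => R.base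
  | m + 1 => R.expandG (R.fullExp m)

theorem col_cast (R : ERS) (p : R.Alph) (z : Option R.Col) (h : p.1 = z) :
    R.col z (cast (congrArg R.E h) p.2) = R.col p.1 p.2 := by
  rcases p with ⟨w, e⟩
  cases h
  rfl

/-- The edge of the full expansion `E_m` labeled by the word `x₀ … x_m`,
together with the fact that its color is the color of its last letter. -/
def wordEdge (R : ERS) (x : ℕ → R.Alph) :
    (m : ℕ) → R.IsWalkUpTo x m →
      {e : (R.fullExp m).E // (R.fullExp m).col e = R.col (x m).1 (x m).2}
  | 0, hx => ⟨cast (congrArg R.E hx.1) (x 0).2, R.col_cast (x 0) none hx.1⟩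
  | m + 1, hx =>
    let prev := R.wordEdge x m ⟨hx.1, fun l hl => hx.2 l (Nat.lt_succ_of_lt hl)⟩
    let h : (x (m + 1)).1 = some ((R.fullExp m).col prev.1) :=
      (hx.2 m (Nat.lt_succ_self m)).trans (congrArg some prev.2.symm)
    ⟨⟨prev.1, cast (congrArg R.E h) (x (m + 1)).2⟩, R.col_cast (x (m + 1)) _ h⟩

/-- The gluing relation: two elements of `Ω_R` are glued when, for every large
enough `n`, their length-`(n+1)` prefixes are incident on a common vertex of
the full expansion `E_n`. -/
def Glued (R : ERS) (x y : ℕ → R.Alph) (hx : R.IsWalk x) (hy : R.IsWalk y) : Prop :=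
  ∃ N : ℕ, ∀ n : ℕ, N ≤ n →
    (R.fullExp n).Adjacent (R.wordEdge x n (hx.upTo n)).1 (R.wordEdge y n (hy.upTo n)).1

/-- The expanding condition on a replacement system (formulated after the
identification of the boundary vertices for loop colors). -/
structure Expanding (R : ERS) : Prop where
  no_isolated : ∀ z (v : R.V z), ∃ e : R.E z, R.ini z e = v ∨ R.fin z e = v
  no_bd_edge : ∀ c : R.Col, ¬ R.loopCol c → ∀ e : R.E (some c),
    ¬ ((R.ini (some c) e = R.bIni c ∧ R.fin (some c) e = R.bFin c) ∨
       (R.ini (some c) e = R.bFin c ∧ R.fin (some c) e = R.bIni c))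
  two_edges : ∀ c : R.Col, 2 ≤ Fintype.card (R.E (some c))
  interior : ∀ c : R.Col, ∃ v : R.V (some c), v ≠ R.bIni c ∧ v ≠ R.bFin c

end ERS

/-- `EndAt ι τ v α` : the edge with initial vertex `ι` and terminal vertex `τ`
is incident on `v`, in the fashion recorded by `α`: incoming (`in`), outgoing
(`out`) or a loop (`lp`). -/
inductive EndAt {V : Type} : V → V → V → EType → Prop
  | inn {i v : V} : i ≠ v → EndAt i v v .inn
  | out {t v : V} : v ≠ t → EndAt v t v .out
  | lp {v : V} : EndAt v v v .lp

/-- Two non-loop edges (given by their endpoints) are parallel. -/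
def Parallel {V : Type} (ia ta ib tb : V) : Prop :=
  ia ≠ ta ∧ ((ia = ib ∧ ta = tb) ∨ (ia = tb ∧ ta = ib))

/-- The Type 1 adjacency-type rule for two distinct adjacent edges, given by
their endpoints: parallel non-loops give the `db` types (same or opposite
orientation), and otherwise the unique common vertex `v` determines the types
via `EndAt`. -/
inductive AdjType {V : Type} : V → V → V → V → EType → EType → Prop
  | dbSame {u v : V} : u ≠ v → AdjType u v u v .dbp .dbp
  | dbOpp {u v : V} : u ≠ v → AdjType u v v u .dbp .dbm
  | single {ia ta ib tb v : V} {α β : EType} :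
      ¬ Parallel ia ta ib tb → EndAt ia ta v α → EndAt ib tb v β →
      AdjType ia ta ib tb α β

/-- The states of the gluing automaton `Gl_R`. -/
inductive GlState (R : ERS) : Type
  | q0 : Option R.Col → GlState R
  | q1 : R.Col → EType → R.Col → EType → GlState R

/-- Membership in `Q₀`. -/
def GlState.inQ0 {R : ERS} : GlState R → Prop
  | .q0 _ => True
  | _ => False

/-- Membership in `Q₁`. -/
def GlState.inQ1 {R : ERS} : GlState R → Prop
  | .q1 _ _ _ _ => True
  | _ => False

/-- The defining conditions for states of `Q₁`: `γ ≠ db⁻` and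
(`δ ∈ {db⁺, db⁻}` iff `γ = db⁺`). -/
def GlState.Valid {R : ERS} : GlState R → Prop
  | .q0 _ => True
  | .q1 _ γ _ δ => γ ≠ .dbm ∧ ((δ = .dbp ∨ δ = .dbm) ↔ γ = .dbp)

/-- The tracked boundary vertex of `Γ_c` for a non-`db` symbol:
`τ_c` for `in`, `ι_c` for `out`, and `λ_c` (the identified boundary vertex)
for `lp`. -/
def trackedV (R : ERS) (c : R.Col) : EType → Set (R.V (some c))
  | .inn => {R.bFin c}
  | .out => {R.bIni c}
  | .lp => {R.bIni c}
  | _ => ∅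

/-- The pairs of tracked vertices of a state `q₁(i,γ;j,δ)`. -/
inductive TrackedPair (R : ERS) (i j : R.Col) :
    EType → EType → R.V (some i) → R.V (some j) → Prop
  | nondb {γ δ : EType} {u : R.V (some i)} {w : R.V (some j)} :
      u ∈ trackedV R i γ → w ∈ trackedV R j δ → TrackedPair R i j γ δ u w
  | dbppIni : TrackedPair R i j .dbp .dbp (R.bIni i) (R.bIni j)
  | dbppFin : TrackedPair R i j .dbp .dbp (R.bFin i) (R.bFin j)
  | dbpmIni : TrackedPair R i j .dbp .dbm (R.bIni i) (R.bFin j)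
  | dbpmFin : TrackedPair R i j .dbp .dbm (R.bFin i) (R.bIni j)

/-- The transitions of the gluing automaton `Gl_R`. -/
inductive GlTrans (R : ERS) : GlState R → R.Alph × R.Alph → GlState R → Prop
  | type0 (z : Option R.Col) (e : R.E z) :
      GlTrans R (.q0 z) (⟨z, e⟩, ⟨z, e⟩) (.q0 (some (R.col z e)))
  | type1 (z : Option R.Col) (a b : R.E z) (hab : a ≠ b) {α β : EType}
      (h : AdjType (R.ini z a) (R.fin z a) (R.ini z b) (R.fin z b) α β) :
      GlTrans R (.q0 z) (⟨z, a⟩, ⟨z, b⟩) (.q1 (R.col z a) α (R.col z b) β)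
  | type2 (i j : R.Col) (γ δ : EType) (a : R.E (some i)) (b : R.E (some j))
      {u : R.V (some i)} {w : R.V (some j)}
      (hp : TrackedPair R i j γ δ u w) {α β : EType}
      (ha : EndAt (R.ini (some i) a) (R.fin (some i) a) u α)
      (hb : EndAt (R.ini (some j) b) (R.fin (some j) b) w β) :
      GlTrans R (.q1 i γ j δ) (⟨some i, a⟩, ⟨some j, b⟩)
        (.q1 (R.col (some i) a) α (R.col (some j) b) β)

/-- Infinite runs of `Gl_R` from the initial state `q₀(0)`. -/
def GlRun (R : ERS) (w : ℕ → R.Alph × R.Alph) (q : ℕ → GlState R) : Prop :=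
  q 0 = .q0 none ∧ ∀ l : ℕ, GlTrans R (q l) (w l) (q (l + 1))

/-- `Gl_R` recognizes the infinite sequence `w`. -/
def GlAccepts (R : ERS) (w : ℕ → R.Alph × R.Alph) : Prop :=
  ∃ q : ℕ → GlState R, GlRun R w q

/-- Finite runs of `Gl_R` processing the letters `w 0, …, w m`. -/
def GlRunFin (R : ERS) (w : ℕ → R.Alph × R.Alph) (m : ℕ) (q : ℕ → GlState R) : Prop :=
  q 0 = .q0 none ∧ ∀ l : ℕ, l ≤ m → GlTrans R (q l) (w l) (q (l + 1))

/-- `Gl_R` recognizes the finite word `w 0, …, w m`. -/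
def GlAcceptsFin (R : ERS) (w : ℕ → R.Alph × R.Alph) (m : ℕ) : Prop :=
  ∃ q : ℕ → GlState R, GlRunFin R w m q

/-- The transitions of the full sub-automaton `T_R` induced by `Q₀`. -/
def TTrans (R : ERS) (s : GlState R) (p : R.Alph × R.Alph) (t : GlState R) : Prop :=
  GlTrans R s p t ∧ s.inQ0 ∧ t.inQ0

/-- Finite runs of `T_R` processing the letters `w 0, …, w m`. -/
def TRunFin (R : ERS) (w : ℕ → R.Alph × R.Alph) (m : ℕ) (q : ℕ → GlState R) : Prop :=
  q 0 = .q0 none ∧ ∀ l : ℕ, l ≤ m → TTrans R (q l) (w l) (q (l + 1))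

/-- `T_R` recognizes the finite word `w 0, …, w m`. -/
def TAcceptsFin (R : ERS) (w : ℕ → R.Alph × R.Alph) (m : ℕ) : Prop :=
  ∃ q : ℕ → GlState R, TRunFin R w m q

end ERSPaper

namespace ERSPaper

/-!
Since `x` and `y` agree below level `m`, both word edges of `E_m` lie in the copy of
`Γ = Γ_{c(x_{m-1})}` that replaced the edge `x₀ … x_{m-1}` (for `m = 0`, in `Γ₀` itself).
That copy is attached to `E_m` by a vertex map which is injective: boundary vertices of
`Γ_c` are identified exactly for loop colours, i.e. exactly when the expanded edge is a
loop. An injective vertex map preserves and reflects incidence and parallelism, so `x_m`,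
`y_m` have the same adjacency type in `Γ` as the word edges in `E_m`. The run reads the
common prefix by Type 0 transitions and ends with the Type 1 transition for that type.
-/

section AdjacencyType

variable {V W : Type}

theorem exists_endAt {i t v : V} (h : i = v ∨ t = v) : ∃ α, EndAt i t v α := by
  by_cases hl : i = t
  · subst hl
    rcases h with rfl | rfl <;> exact ⟨_, .lp⟩
  · rcases h with rfl | rfl
    exacts [⟨_, .out hl⟩, ⟨_, .inn hl⟩]

theorem exists_adjType {ia ta ib tb : V} (h : ∃ v, (ia = v ∨ ta = v) ∧ (ib = v ∨ tb = v)) :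
    ∃ α β, AdjType ia ta ib tb α β := by
  by_cases hpar : Parallel ia ta ib tb
  · obtain ⟨hne, ⟨rfl, rfl⟩ | ⟨rfl, rfl⟩⟩ := hpar
    exacts [⟨_, _, .dbSame hne⟩, ⟨_, _, .dbOpp hne⟩]
  · obtain ⟨v, hA, hB⟩ := h
    obtain ⟨α, hα⟩ := exists_endAt hA
    obtain ⟨β, hβ⟩ := exists_endAt hB
    exact ⟨α, β, .single hpar hα hβ⟩

theorem exists_common_vertex_of_injective {φ : V → W} (hφ : Function.Injective φ)
    {ia ta ib tb : V} (h : ∃ w, (φ ia = w ∨ φ ta = w) ∧ (φ ib = w ∨ φ tb = w)) :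
    ∃ v, (ia = v ∨ ta = v) ∧ (ib = v ∨ tb = v) := by
  obtain ⟨w, h1 | h1, h2 | h2⟩ := h <;> subst h1
  exacts [⟨ia, .inl rfl, .inl (hφ h2)⟩, ⟨ia, .inl rfl, .inr (hφ h2)⟩,
    ⟨ta, .inr rfl, .inl (hφ h2)⟩, ⟨ta, .inr rfl, .inr (hφ h2)⟩]

theorem EndAt.map {φ : V → W} (hφ : Function.Injective φ) {i t v : V} {α : EType}
    (h : EndAt i t v α) : EndAt (φ i) (φ t) (φ v) α := by
  cases h with
  | inn h => exact .inn (hφ.ne h)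
  | out h => exact .out (hφ.ne h)
  | lp => exact .lp

theorem Parallel.of_map {φ : V → W} (hφ : Function.Injective φ) {ia ta ib tb : V}
    (h : Parallel (φ ia) (φ ta) (φ ib) (φ tb)) : Parallel ia ta ib tb := by
  obtain ⟨hne, ⟨h1, h2⟩ | ⟨h1, h2⟩⟩ := h
  exacts [⟨ne_of_apply_ne φ hne, .inl ⟨hφ h1, hφ h2⟩⟩,
    ⟨ne_of_apply_ne φ hne, .inr ⟨hφ h1, hφ h2⟩⟩]

theorem AdjType.map {φ : V → W} (hφ : Function.Injective φ) {ia ta ib tb : V}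
    {α β : EType} (h : AdjType ia ta ib tb α β) :
    AdjType (φ ia) (φ ta) (φ ib) (φ tb) α β := by
  cases h with
  | dbSame hne => exact .dbSame (hφ.ne hne)
  | dbOpp hne => exact .dbOpp (hφ.ne hne)
  | single hpar hα hβ => exact .single (mt (Parallel.of_map hφ) hpar) (hα.map hφ) (hβ.map hφ)

end AdjacencyType

namespace ERS

variable {R : ERS}

theorem IsWalkUpTo.mono {x : ℕ → R.Alph} {m k : ℕ} (hx : R.IsWalkUpTo x m) (hk : k ≤ m) :
    R.IsWalkUpTo x k :=
  ⟨hx.1, fun l hl => hx.2 l (hl.trans_le hk)⟩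

theorem IsWalkUpTo.fst_eq {x y : ℕ → R.Alph} {m : ℕ} (hx : R.IsWalkUpTo x m)
    (hy : R.IsWalkUpTo y m) (hxy : ∀ l < m, x l = y l) : (y m).1 = (x m).1 := by
  cases m with
  | zero => exact hy.1.trans hx.1.symm
  | succ k => rw [hy.2 k k.lt_succ_self, hx.2 k k.lt_succ_self, hxy k k.lt_succ_self]

theorem eq_mk_cast (p : R.Alph) {z : Option R.Col} (h : p.1 = z) :
    p = ⟨z, cast (congrArg R.E h) p.2⟩ := by
  cases p; cases h; rfl

theorem attach_injective (G : GraphData R) (e : G.E)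
    (he : G.ι e = G.τ e ↔ R.loopCol (G.col e)) : Function.Injective (R.attach G e) := by
  have hb := he.trans (R.bd_eq_iff _).symm
  intro u w huw
  unfold attach at huw
  split_ifs at huw <;> simp_all

theorem fullExp_ι_eq_τ_iff (m : ℕ) (e : (R.fullExp m).E) :
    (R.fullExp m).ι e = (R.fullExp m).τ e ↔ R.loopCol ((R.fullExp m).col e) := by
  induction m with
  | zero => exact R.loop_iff none e
  | succ k ih =>
    obtain ⟨f, e⟩ := e
    exact (attach_injective _ f (ih f)).eq_iff.trans (R.loop_iff _ e)

theorem wordEdge_congr {x y : ℕ → R.Alph} {k : ℕ} (hx : R.IsWalkUpTo x k)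
    (hy : R.IsWalkUpTo y k) (hxy : ∀ l ≤ k, x l = y l) :
    (R.wordEdge x k hx).1 = (R.wordEdge y k hy).1 := by
  have snd_heq : ∀ l ≤ k, HEq (x l).2 (y l).2 := fun l hl => (Sigma.ext_iff.mp (hxy l hl)).2
  induction k with
  | zero => exact eq_of_heq ((cast_heq _ _).trans ((snd_heq 0 le_rfl).trans (cast_heq _ _).symm))
  | succ k ih =>
    refine Sigma.ext (ih (hx.mono k.le_succ) (hy.mono k.le_succ)
      (fun l hl => hxy l (hl.trans k.le_succ)) (fun l hl => snd_heq l (hl.trans k.le_succ))) ?_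
    exact (cast_heq _ _).trans ((snd_heq _ le_rfl).trans (cast_heq _ _).symm)

theorem base_endpoints {q : R.Alph} (hq : q.1 = none) {w : Option R.Col} {e : R.E w}
    (hqe : q = ⟨w, e⟩) (hw : w = none) :
    R.base.ι (cast (congrArg R.E hq) q.2) = cast (congrArg R.V hw) (R.ini w e) ∧
      R.base.τ (cast (congrArg R.E hq) q.2) = cast (congrArg R.V hw) (R.fin w e) := by
  subst hqe hw
  exact ⟨rfl, rfl⟩

theorem expandG_endpoints (G : GraphData R) {p p' : G.E} (hp : p = p') {q : R.Alph}
    (hq : q.1 = some (G.col p)) {w : Option R.Col} {e : R.E w} (hqe : q = ⟨w, e⟩)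
    (hw : w = some (G.col p')) :
    (R.expandG G).ι ⟨p, cast (congrArg R.E hq) q.2⟩ =
        R.attach G p' (cast (congrArg R.V hw) (R.ini w e)) ∧
      (R.expandG G).τ ⟨p, cast (congrArg R.E hq) q.2⟩ =
        R.attach G p' (cast (congrArg R.V hw) (R.fin w e)) := by
  subst hp hqe hw
  exact ⟨rfl, rfl⟩

theorem exists_embedding_wordEdge_endpoints {x : ℕ → R.Alph} {m : ℕ}
    (hx : R.IsWalkUpTo x m) :
    ∃ φ : R.V (x m).1 → (R.fullExp m).V, Function.Injective φ ∧
      ∀ (y : ℕ → R.Alph) (hy : R.IsWalkUpTo y m), (∀ l < m, x l = y l) →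
        ∀ e : R.E (x m).1, y m = ⟨(x m).1, e⟩ →
          (R.fullExp m).ι (R.wordEdge y m hy).1 = φ (R.ini _ e) ∧
          (R.fullExp m).τ (R.wordEdge y m hy).1 = φ (R.fin _ e) := by
  cases m with
  | zero =>
    exact ⟨cast (congrArg R.V hx.1), (cast_bijective _).injective,
      fun y hy _ e hye => base_endpoints hy.1 hye hx.1⟩
  | succ k =>
    have hx' := hx.mono k.le_succ
    set p := (R.wordEdge x k hx').1
    have hX : (x (k + 1)).1 = some ((R.fullExp k).col p) :=
      (hx.2 k k.lt_succ_self).trans (congrArg some (R.wordEdge x k hx').2.symm)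
    refine ⟨fun v => R.attach _ p (cast (congrArg R.V hX) v),
      (attach_injective _ p (fullExp_ι_eq_τ_iff k p)).comp (cast_bijective _).injective,
      fun y hy hxy e hye => ?_⟩
    have hy' := hy.mono k.le_succ
    exact expandG_endpoints _
      (wordEdge_congr hy' hx' fun l hl => (hxy l (Nat.lt_succ_of_le hl)).symm)
      ((hy.2 k k.lt_succ_self).trans (congrArg some (R.wordEdge y k hy').2.symm)) hye hX

theorem glRunFin_diagonal_prefix {x y : ℕ → R.Alph} {m : ℕ} (hx : R.IsWalkUpTo x m)
    (hxy : ∀ l < m, x l = y l) {s : GlState R} (hs : GlTrans R (.q0 (x m).1) (x m, y m) s) :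
    GlRunFin R (fun n => (x n, y n)) m (fun l => if l ≤ m then .q0 (x l).1 else s) := by
  refine ⟨by simp [hx.1], fun l hl => ?_⟩
  rcases hl.lt_or_eq with hl | rfl
  · simp only [hl.le, show l + 1 ≤ m from hl, if_true]
    rw [← hxy l hl, hx.2 l hl]
    exact .type0 _ _
  · simpa using hs

end ERS

theorem adjacency_implies_type1_transition_general (R : ERS)
    (x y : ℕ → R.Alph) (m : ℕ)
    (hx : R.IsWalkUpTo x m) (hy : R.IsWalkUpTo y m)
    (heq : ∀ l < m, x l = y l) (hne : x m ≠ y m)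
    (hadj : (R.fullExp m).Adjacent (R.wordEdge x m hx).1 (R.wordEdge y m hy).1) :
    ∃ q : ℕ → GlState R,
      GlRunFin R (fun n => (x n, y n)) m q ∧
      (∀ l ≤ m, (q l).inQ0) ∧ (q (m + 1)).inQ1 ∧
      ∃ (α β : EType) (hzy : (y m).1 = (x m).1),
        q (m + 1) = .q1 (R.col (x m).1 (x m).2) α (R.col (y m).1 (y m).2) β ∧
        AdjType (R.ini (x m).1 (x m).2) (R.fin (x m).1 (x m).2)
          (R.ini (x m).1 (cast (congrArg R.E hzy) (y m).2))
          (R.fin (x m).1 (cast (congrArg R.E hzy) (y m).2)) α β ∧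
        AdjType ((R.fullExp m).ι (R.wordEdge x m hx).1)
                ((R.fullExp m).τ (R.wordEdge x m hx).1)
                ((R.fullExp m).ι (R.wordEdge y m hy).1)
                ((R.fullExp m).τ (R.wordEdge y m hy).1) α β := by
  have hzy := hx.fst_eq hy heq
  set b := cast (congrArg R.E hzy) (y m).2
  have hym : y m = ⟨(x m).1, b⟩ := ERS.eq_mk_cast (y m) hzy
  obtain ⟨φ, hφ, hends⟩ := ERS.exists_embedding_wordEdge_endpoints hx
  obtain ⟨hxi, hxt⟩ := hends x hx (fun _ _ => rfl) (x m).2 rfl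
  obtain ⟨hyi, hyt⟩ := hends y hy heq b hym
  have hshare : ∃ v, (φ (R.ini _ (x m).2) = v ∨ φ (R.fin _ (x m).2) = v) ∧
      (φ (R.ini _ b) = v ∨ φ (R.fin _ b) = v) := by
    rw [← hxi, ← hxt, ← hyi, ← hyt]
    exact hadj
  obtain ⟨α, β, hloc⟩ := exists_adjType (exists_common_vertex_of_injective hφ hshare)
  have hab : (x m).2 ≠ b := fun h => hne (hym.trans (congrArg _ h).symm).symm
  have hs := GlTrans.type1 _ _ _ hab hloc
  rw [R.col_cast (y m) _ hzy, ← hym] at hs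
  refine ⟨_, ERS.glRunFin_diagonal_prefix hx heq hs, fun l hl => by simp [hl, GlState.inQ0],
    by simp [GlState.inQ1], α, β, hzy, by simp, hloc, ?_⟩
  rw [hxi, hxt, hyi, hyt]
  exact hloc.map hφ

/-- adjacency implies Type 1 transition.  Given two words
`x₀…x_m` and `y₀…y_m` of `E_R` that agree except that `x_m ≠ y_m`, if they
represent adjacent edges of the full expansion `E_m`, then
`(x₀,y₀)…(x_m,y_m)` is recognized by `Gl_R`, its run consisting of `m` Type 0
transitions followed by one Type 1 transition.  Moreover the adjacency type
of `x_m` and `y_m` in the graph `Γ_{c(x_{m-1})} = Γ_{c(y_{m-1})}` coincides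
with the adjacency type of `x₀…x_m` and `y₀…y_m` in `E_m`, and it is recorded
by the last state `q₁(c(x_m),α;c(y_m),β)` of the run. -/
theorem adjacency_implies_type1_transition (R : ERS) (hR : R.Expanding)
    (x y : ℕ → R.Alph) (m : ℕ)
    (hx : R.IsWalkUpTo x m) (hy : R.IsWalkUpTo y m)
    (heq : ∀ l < m, x l = y l) (hne : x m ≠ y m)
    (hadj : (R.fullExp m).Adjacent (R.wordEdge x m hx).1 (R.wordEdge y m hy).1) :
    ∃ q : ℕ → GlState R,
      GlRunFin R (fun n => (x n, y n)) m q ∧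
      (∀ l ≤ m, (q l).inQ0) ∧ (q (m + 1)).inQ1 ∧
      ∃ (α β : EType) (hzy : (y m).1 = (x m).1),
        q (m + 1) = .q1 (R.col (x m).1 (x m).2) α (R.col (y m).1 (y m).2) β ∧
        AdjType (R.ini (x m).1 (x m).2) (R.fin (x m).1 (x m).2)
          (R.ini (x m).1 (cast (congrArg R.E hzy) (y m).2))
          (R.fin (x m).1 (cast (congrArg R.E hzy) (y m).2)) α β ∧
        AdjType ((R.fullExp m).ι (R.wordEdge x m hx).1)
                ((R.fullExp m).τ (R.wordEdge x m hx).1)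
                ((R.fullExp m).ι (R.wordEdge y m hy).1)
                ((R.fullExp m).τ (R.wordEdge y m hy).1) α β :=
  adjacency_implies_type1_transition_general R x y m hx hy heq hne hadj

end ERSPaper
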